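/- Let λ_{i1} > 0, λ_{i2} ≥ 0, μ_i > 0 for i = 1, 2. Then the ratio t ↦ φ^W_1(t)/φ^W_2(t) is monotone increasing on (0, ∞) (i.e. τ^W_1 ≥_lr τ^W_2) if and only if 2(λ₂₁ − λ₁₁) − λ₁₂ + λ₂₂ + μ₂ − μ₁ ≥ max(a₂ − a₁, 0). -/

import Mathlib

/-- `a_i = sqrt((λ_{i2} + μ_i)² + 4 λ_{i1} μ_i)` for the warm standby system. -/
noncomputable def aW (l1 l2 m : ℝ) : ℝ := Real.sqrt ((l2 + m) ^ 2 + 4 * l1 * m)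

/-- Density of the lifetime of the Markovian two-unit warm standby system. -/
noncomputable def phiW (l1 l2 m t : ℝ) : ℝ :=
  Real.exp (-((2 * l1 + l2 + m) * t / 2)) * (2 * l1 * (l1 + l2) / aW l1 l2 m) *
    Real.sinh (aW l1 l2 m * t / 2)

/-!
The ratio `φ₁ / φ₂` is `C * exp (δ t) * sinh (A t) / sinh (B t)` with `C > 0`, `A = a₁ / 2`,
`B = a₂ / 2` and `2 δ = (2λ₂₁ + λ₂₂ + μ₂) - (2λ₁₁ + λ₁₂ + μ₁)`; its logarithmic derivative is
`(δ t + g (A t) - g (B t)) / t` with `g x = x coth x`. So the ratio increases iff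
`δ t + g (A t) - g (B t) ≥ 0` for all `t > 0`.

On `(0, ∞)`, `g` is increasing (convexity of `sinh`) and `g x - x = 2x / (exp (2x) - 1)` is
decreasing (convexity of `exp`): according to the sign of `A - B`, one of them shows that
`δ ≥ max (B - A) 0` suffices. Conversely `x ≤ g x ≤ x + 1` and `1 ≤ g x ≤ cosh x`, so letting
`t → ∞`, resp. `t → 0⁺`, forces `δ ≥ B - A`, resp. `δ ≥ 0`.
-/

open Real Set Filter Topology

lemma monotoneOn_iff_forall_nonneg_of_hasDerivAt {f f' : ℝ → ℝ} {s : Set ℝ} (hs : IsOpen s)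
    (hsc : Convex ℝ s) (hf : ∀ x ∈ s, HasDerivAt f (f' x) x) :
    MonotoneOn f s ↔ ∀ x ∈ s, 0 ≤ f' x := by
  refine ⟨fun hmono x hx => ?_, fun hf' => ?_⟩
  · simpa [derivWithin_of_isOpen hs hx, (hf x hx).deriv] using hmono.derivWithin_nonneg (x := x)
  · refine monotoneOn_of_hasDerivWithinAt_nonneg (f' := f') hsc
      (fun x hx => (hf x hx).continuousAt.continuousWithinAt) ?_ ?_ <;> rw [hs.interior_eq]
    · exact fun x hx => (hf x hx).hasDerivWithinAt
    · exact hf'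

lemma convexOn_sinh_Ici : ConvexOn ℝ (Ici 0) sinh :=
  MonotoneOn.convexOn_of_deriv (convex_Ici 0) continuous_sinh.continuousOn
    differentiable_sinh.differentiableOn (by
      rw [Real.deriv_sinh, interior_Ici]
      exact cosh_strictMonoOn.monotoneOn.mono Ioi_subset_Ici_self)

lemma sinh_le_mul_cosh {x : ℝ} (hx : 0 < x) : sinh x ≤ x * cosh x := by
  have h := convexOn_sinh_Ici.slope_le_of_hasDerivAt self_mem_Ici hx.le hx (hasDerivAt_sinh x)
  rwa [slope_def_field, sinh_zero, sub_zero, sub_zero, div_le_iff₀ hx, mul_comm] at h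

noncomputable def mulCoth (x : ℝ) : ℝ := x * cosh x / sinh x

lemma mulCoth_sub_self (x : ℝ) : mulCoth x - x = 2 * x / (exp (2 * x) - 1) := by
  rcases eq_or_ne x 0 with rfl | hx
  · simp [mulCoth]
  have hs : sinh x ≠ 0 := sinh_ne_zero.2 hx
  have he : exp (2 * x) - 1 = 2 * sinh x * exp x := by
    rw [sinh_eq, exp_neg, two_mul, exp_add]; field_simp
  rw [he, show mulCoth x - x = x * (cosh x - sinh x) / sinh x by rw [mulCoth]; field_simp,
    cosh_sub_sinh, exp_neg]
  field_simp

lemma self_le_mulCoth {x : ℝ} (hx : 0 < x) : x ≤ mulCoth x := by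
  rw [← sub_nonneg, mulCoth_sub_self]
  have := add_one_le_exp (2 * x)
  exact div_nonneg (by linarith) (by linarith)

lemma mulCoth_le_self_add_one {x : ℝ} (hx : 0 < x) : mulCoth x ≤ x + 1 := by
  rw [← sub_le_iff_le_add', mulCoth_sub_self]
  have := add_one_le_exp (2 * x)
  exact div_le_one_of_le₀ (by linarith) (by linarith)

lemma one_le_mulCoth {x : ℝ} (hx : 0 < x) : 1 ≤ mulCoth x := by
  rw [mulCoth, le_div_iff₀ (sinh_pos_iff.2 hx), one_mul]
  exact sinh_le_mul_cosh hx

lemma mulCoth_le_cosh {x : ℝ} (hx : 0 < x) : mulCoth x ≤ cosh x := by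
  rw [mulCoth, div_le_iff₀ (sinh_pos_iff.2 hx), mul_comm (cosh x)]
  exact mul_le_mul_of_nonneg_right (self_le_sinh_iff.2 hx.le) (cosh_pos x).le

lemma antitoneOn_mulCoth_sub_self : AntitoneOn (fun x => mulCoth x - x) (Ioi 0) := by
  intro x hx y hy hxy
  have hslope : ∀ z : ℝ, mulCoth z - z = (slope exp 0 (2 * z))⁻¹ := fun z => by
    rw [mulCoth_sub_self, slope_def_field, exp_zero, sub_zero, inv_div]
  simp only [hslope]
  have hx2 : (0 : ℝ) < 2 * x := by simpa using hx
  refine inv_anti₀ ?_ (convexOn_exp.slope_mono (mem_univ 0) ⟨mem_univ _, hx2.ne'⟩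
    ⟨mem_univ _, by simp only [mem_singleton_iff]; linarith [mem_Ioi.1 hy]⟩ (by linarith))
  rw [slope_def_field, exp_zero, sub_zero]
  exact div_pos (by linarith [add_one_le_exp (2 * x)]) hx2

lemma monotoneOn_mulCoth : MonotoneOn mulCoth (Ioi 0) := by
  intro y hy x hx hyx
  rcases hyx.eq_or_lt with rfl | hlt
  · rfl
  have hy : 0 < y := hy
  have hx : 0 < x := hx
  -- `sinh z / z` is monotone, compared at `z = x - y` and `z = x + y`
  have h := convexOn_sinh_Ici.slope_mono self_mem_Ici (a := x - y) (b := x + y)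
    ⟨mem_Ici.2 (by linarith), (sub_pos.2 hlt).ne'⟩ ⟨mem_Ici.2 (by linarith), (add_pos hx hy).ne'⟩
    (by linarith)
  rw [slope_def_field, slope_def_field, sinh_zero, sub_zero, sub_zero, sub_zero, sub_zero,
    div_le_div_iff₀ (by linarith) (by linarith), sinh_sub, sinh_add] at h
  rw [mulCoth, mulCoth, div_le_div_iff₀ (sinh_pos_iff.2 hy) (sinh_pos_iff.2 hx)]
  linarith

lemma sub_le_of_forall_pos_nonneg_mulCoth {A B δ : ℝ} (hA : 0 < A) (hB : 0 < B)
    (h : ∀ t > 0, 0 ≤ δ * t + mulCoth (A * t) - mulCoth (B * t)) : B - A ≤ δ := by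
  have hpos : ∀ t > 0, 0 ≤ δ + A - B + t⁻¹ := fun t ht => by
    have := h t ht
    have := mulCoth_le_self_add_one (mul_pos hA ht)
    have := self_le_mulCoth (mul_pos hB ht)
    refine nonneg_of_mul_nonneg_left ?_ ht
    rw [add_mul, inv_mul_cancel₀ ht.ne']
    linarith
  have := ge_of_tendsto (tendsto_const_nhds.add tendsto_inv_atTop_zero)
    ((eventually_gt_atTop 0).mono hpos)
  linarith

lemma nonneg_of_forall_pos_nonneg_mulCoth {A B δ : ℝ} (hA : 0 < A) (hB : 0 < B)
    (h : ∀ t > 0, 0 ≤ δ * t + mulCoth (A * t) - mulCoth (B * t)) : 0 ≤ δ := by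
  -- the difference quotient of `cosh (A * t)` at `0` tends to its derivative `0`
  have hpos : ∀ t > 0, 0 ≤ δ + t⁻¹ * (cosh (A * (0 + t)) - cosh (A * 0)) := fun t ht => by
    have := h t ht
    have := mulCoth_le_cosh (mul_pos hA ht)
    have := one_le_mulCoth (mul_pos hB ht)
    refine nonneg_of_mul_nonneg_left ?_ ht
    rw [add_mul, mul_comm t⁻¹, mul_assoc, inv_mul_cancel₀ ht.ne', zero_add, mul_zero, cosh_zero]
    linarith
  have hderiv : HasDerivAt (fun t => cosh (A * t)) 0 0 := by
    simpa using ((hasDerivAt_id (0 : ℝ)).const_mul A).cosh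
  simpa using ge_of_tendsto (tendsto_const_nhds.add hderiv.tendsto_slope_zero_right)
    (eventually_nhdsWithin_of_forall hpos)

theorem forall_pos_nonneg_mulCoth_iff {A B δ : ℝ} (hA : 0 < A) (hB : 0 < B) :
    (∀ t > 0, 0 ≤ δ * t + mulCoth (A * t) - mulCoth (B * t)) ↔ max (B - A) 0 ≤ δ := by
  refine ⟨fun h => max_le (sub_le_of_forall_pos_nonneg_mulCoth hA hB h)
    (nonneg_of_forall_pos_nonneg_mulCoth hA hB h), fun hδ t ht => ?_⟩
  rw [max_le_iff] at hδ
  rcases le_total B A with hBA | hAB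
  · have hmono : mulCoth (B * t) ≤ mulCoth (A * t) := monotoneOn_mulCoth (mul_pos hB ht)
      (mul_pos hA ht) (mul_le_mul_of_nonneg_right hBA ht.le)
    nlinarith
  · have hanti : mulCoth (B * t) - B * t ≤ mulCoth (A * t) - A * t :=
      antitoneOn_mulCoth_sub_self (mul_pos hA ht) (mul_pos hB ht)
        (mul_le_mul_of_nonneg_right hAB ht.le)
    nlinarith

lemma hasDerivAt_const_mul_exp_mul_sinh_div_sinh {A B C δ t : ℝ} (hA : A ≠ 0) (hB : B ≠ 0)
    (ht : t ≠ 0) :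
    HasDerivAt (fun s => C * exp (δ * s) * sinh (A * s) / sinh (B * s))
      (C * exp (δ * t) * sinh (A * t) / sinh (B * t) *
        ((δ * t + mulCoth (A * t) - mulCoth (B * t)) / t)) t := by
  have hsB : sinh (B * t) ≠ 0 := sinh_ne_zero.2 (mul_ne_zero hB ht)
  have hlin : ∀ c : ℝ, HasDerivAt (fun s => c * s) c t := fun c => by
    simpa using (hasDerivAt_id t).const_mul c
  have h := ((((hlin δ).exp).const_mul C).mul (hlin A).sinh).div (hlin B).sinh hsB
  refine h.congr_deriv ?_
  simp only [mulCoth, Pi.mul_apply]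
  field_simp

theorem monotoneOn_const_mul_exp_mul_sinh_div_sinh_iff {A B C δ : ℝ} (hA : 0 < A) (hB : 0 < B)
    (hC : 0 < C) :
    MonotoneOn (fun t => C * exp (δ * t) * sinh (A * t) / sinh (B * t)) (Ioi 0) ↔
      max (B - A) 0 ≤ δ := by
  rw [monotoneOn_iff_forall_nonneg_of_hasDerivAt isOpen_Ioi (convex_Ioi 0)
    fun t ht => hasDerivAt_const_mul_exp_mul_sinh_div_sinh hA.ne' hB.ne' (ne_of_gt ht),
    ← forall_pos_nonneg_mulCoth_iff hA hB]
  refine forall₂_congr fun t (ht : 0 < t) => ?_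
  have : 0 < C * exp (δ * t) * sinh (A * t) / sinh (B * t) := by
    have := sinh_pos_iff.2 (mul_pos hA ht)
    have := sinh_pos_iff.2 (mul_pos hB ht)
    positivity
  rw [mul_nonneg_iff_of_pos_left this, le_div_iff₀ ht, zero_mul]

lemma phiW_div_phiW (l11 l12 l21 l22 m1 m2 t : ℝ) :
    phiW l11 l12 m1 t / phiW l21 l22 m2 t =
      (2 * l11 * (l11 + l12) / aW l11 l12 m1) / (2 * l21 * (l21 + l22) / aW l21 l22 m2) *
        exp ((2 * l21 + l22 + m2 - (2 * l11 + l12 + m1)) / 2 * t) *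
        sinh (aW l11 l12 m1 / 2 * t) / sinh (aW l21 l22 m2 / 2 * t) := by
  simp only [phiW]
  rw [mul_div_mul_comm, mul_div_mul_comm, ← exp_sub]
  ring_nf

theorem warm_lr_iff (l11 l12 l21 l22 m1 m2 : ℝ)
    (h11 : 0 < l11) (h12 : 0 ≤ l12) (h21 : 0 < l21) (h22 : 0 ≤ l22)
    (hm1 : 0 < m1) (hm2 : 0 < m2) :
    MonotoneOn (fun t : ℝ => phiW l11 l12 m1 t / phiW l21 l22 m2 t) (Set.Ioi (0 : ℝ)) ↔
      2 * (l21 - l11) - l12 + l22 + m2 - m1 ≥ max (aW l21 l22 m2 - aW l11 l12 m1) 0 := by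
  have ha1 : 0 < aW l11 l12 m1 := sqrt_pos.2 (by positivity)
  have ha2 : 0 < aW l21 l22 m2 := sqrt_pos.2 (by positivity)
  simp only [phiW_div_phiW]
  rw [monotoneOn_const_mul_exp_mul_sinh_div_sinh_iff (by positivity) (by positivity)
    (by positivity), ge_iff_le, max_le_iff, max_le_iff]
  constructor <;> rintro ⟨h, h'⟩ <;> constructor <;> linarith
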